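/- arXiv:1401.1915 — 6 statements merged into one kernel-verified Lean document; each statement's English description precedes it below -/
import Mathlib

section
/- Let G(x) = 1/(1 + e^{-x}) be the standard logistic c.d.f. For 0 < r < 1, the density of the splogit distribution, f(x) = d/dx [G(x/r)^r], attains its maximum at the unique mode M = r · log(r), and consequently the Arnold–Groeneveld skewness γ_M = 1 - 2·G(M/r)^r equals 1 - 2·(r/(r+1))^r. -/
/-!
Writing `t = exp (-(x / r))`, the splogit density is `f x = t * (1 + t) ^ (-(r + 1))`, and
`x ↦ t` is injective. Bernoulli's inequality `(1 + y) ^ (r + 1) > 1 + (r + 1) y` at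
`y = (r t - 1) / (r + 1)` shows that this function of `t > 0` has its strict maximum
`r⁻¹ * (1 + r⁻¹) ^ (-(r + 1))` at `t = r⁻¹`, i.e. at `x = r log r`, where `G (x / r) = r / (r + 1)`.
-/

open Real

lemma hasDerivAt_inv_one_add_exp_neg_div_rpow {r : ℝ} (hr : r ≠ 0) (x : ℝ) :
    HasDerivAt (fun y => (1 + exp (-(y / r)))⁻¹ ^ r)
      (exp (-(x / r)) * (1 + exp (-(x / r))) ^ (-(r + 1))) x := by
  have hfun : (fun y => (1 + exp (-(y / r)))⁻¹ ^ r) = fun y => (1 + exp (-(y / r))) ^ (-r) := by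
    funext y
    rw [inv_rpow (by positivity), ← rpow_neg (by positivity)]
  have hinner : HasDerivAt (fun y => 1 + exp (-(y / r))) (exp (-(x / r)) * -(1 / r)) x :=
    ((hasDerivAt_id x).div_const r).neg.exp.const_add 1
  rw [hfun]
  convert hinner.rpow_const (p := -r) (Or.inl (by positivity)) using 1
  rw [show -r - 1 = -(r + 1) by ring]
  field_simp

lemma lt_add_div_add_one_rpow {r s : ℝ} (hr : 0 < r) (hs : 0 < s) (hs1 : s ≠ 1) :
    s < ((r + s) / (r + 1)) ^ (r + 1) := by
  have hr1 : 0 < r + 1 := by linarith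
  have hbernoulli := one_add_mul_self_lt_rpow_one_add
    (show -1 ≤ (s - 1) / (r + 1) by rw [le_div_iff₀ hr1]; nlinarith)
    (div_ne_zero (sub_ne_zero.mpr hs1) hr1.ne') (show 1 < r + 1 by linarith)
  convert hbernoulli using 2 <;> field_simp <;> ring

lemma mul_one_add_rpow_neg_lt {r t : ℝ} (hr : 0 < r) (ht : 0 < t) (htr : t ≠ r⁻¹) :
    t * (1 + t) ^ (-(r + 1)) < r⁻¹ * (1 + r⁻¹) ^ (-(r + 1)) := by
  have hrt : r * t ≠ 1 := fun h => htr (eq_inv_of_mul_eq_one_right h)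
  have hkey := lt_add_div_add_one_rpow hr (mul_pos hr ht) hrt
  have hsplit : ((r + r * t) / (r + 1)) ^ (r + 1) = (1 + t) ^ (r + 1) * (r / (r + 1)) ^ (r + 1) := by
    rw [← mul_rpow (by positivity) (by positivity)]
    field_simp
  have hmax : (1 + r⁻¹) ^ (-(r + 1)) = (r / (r + 1)) ^ (r + 1) := by
    rw [rpow_neg (by positivity), ← inv_rpow (by positivity)]
    field_simp
  rw [hsplit] at hkey
  rw [hmax, rpow_neg (by positivity), ← div_eq_mul_inv, inv_mul_eq_div,
    div_lt_div_iff₀ (by positivity) hr]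
  linarith

theorem stmt_4_general (r : ℝ) (hr : 0 < r)
    (G : ℝ → ℝ) (hG : ∀ x, G x = 1 / (1 + Real.exp (-x)))
    (f : ℝ → ℝ) (hf : ∀ x, f x = deriv (fun y => G (y / r) ^ r) x)
    (M : ℝ) (hM : M = r * Real.log r) :
    (∀ x, x ≠ M → f x < f M) ∧
      1 - 2 * G (M / r) ^ r = 1 - 2 * (r / (r + 1)) ^ r := by
  have hMr : M / r = log r := by rw [hM]; field_simp
  have hexpM : exp (-(M / r)) = r⁻¹ := by rw [hMr, ← log_inv, exp_log (by positivity)]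
  have hG' : G = fun x => (1 + exp (-x))⁻¹ := funext fun x => by rw [hG, one_div]
  have hdensity (x : ℝ) : f x = exp (-(x / r)) * (1 + exp (-(x / r))) ^ (-(r + 1)) := by
    rw [hf, hG']
    exact (hasDerivAt_inv_one_add_exp_neg_div_rpow hr.ne' x).deriv
  refine ⟨fun x hx => ?_, ?_⟩
  · have hexp : exp (-(x / r)) ≠ r⁻¹ := by
      rw [← hexpM]
      exact fun h => hx ((div_left_inj' hr.ne').mp (neg_injective (exp_injective h)))
    rw [hdensity, hdensity, hexpM]
    exact mul_one_add_rpow_neg_lt hr (exp_pos _) hexp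
  · rw [hG, hexpM]
    congr 3
    field_simp

/-- For the splogit family with `0 < r < 1`, the density `f = (G(·/r)^r)'` (with `G` the
standard logistic c.d.f.) attains its maximum at the unique mode `M = r log r`, and the
Arnold–Groeneveld skewness `1 - 2 G(M/r)^r` equals `1 - 2 (r/(r+1))^r`. -/
theorem stmt_4 (r : ℝ) (hr : 0 < r) (hr1 : r < 1)
    (G : ℝ → ℝ) (hG : ∀ x, G x = 1 / (1 + Real.exp (-x)))
    (f : ℝ → ℝ) (hf : ∀ x, f x = deriv (fun y => G (y / r) ^ r) x)
    (M : ℝ) (hM : M = r * Real.log r) :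
    (∀ x, x ≠ M → f x < f M) ∧
      1 - 2 * G (M / r) ^ r = 1 - 2 * (r / (r + 1)) ^ r :=
  stmt_4_general r hr G hG f hf M hM
end

section
/- The function γ(r) = 1 - 2·(r/(r+1))^r on (0,1) is strictly increasing, negative, and satisfies γ(r) → 0 as r → 1⁻. -/
/-!
Write `(r / (r + 1)) ^ r = exp (r * log (r / (r + 1)))`. The exponent has derivative
`log (r / (r + 1)) + 1 / (r + 1)`, which is negative because `log x < x - 1` at `x = r / (r + 1)`.
Hence `γ` is strictly increasing on `(0, ∞)`; since `γ 1 = 0` it is negative on `(0, 1)`, and the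
limit at `1` is continuity of `γ`.
-/

open Real Set Filter Topology

lemma strictAntiOn_mul_log_div_add_one :
    StrictAntiOn (fun r : ℝ => r * log (r / (r + 1))) (Ioi 0) := by
  apply strictAntiOn_of_deriv_neg (convex_Ioi 0)
  · refine continuousOn_id.mul (ContinuousOn.log (by fun_prop (disch := grind)) ?_)
    intro r (hr : 0 < r)
    positivity
  · intro r hr
    rw [interior_Ioi, mem_Ioi] at hr
    have hr1 : r + 1 ≠ 0 := by positivity
    have hderiv : HasDerivAt (fun r : ℝ => r * log (r / (r + 1)))
        (log (r / (r + 1)) + 1 / (r + 1)) r := by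
      have hq : HasDerivAt (fun r : ℝ => r / (r + 1)) (1 / (r + 1) ^ 2) r :=
        ((hasDerivAt_id' r).div ((hasDerivAt_id' r).add_const 1) hr1).congr_deriv (by ring)
      refine ((hasDerivAt_id' r).mul (hq.log (by positivity))).congr_deriv ?_
      field_simp
    have hlog : log (r / (r + 1)) < r / (r + 1) - 1 :=
      log_lt_sub_one_of_pos (by positivity) (by rw [Ne, div_eq_one_iff_eq hr1]; linarith)
    rw [hderiv.deriv]
    have : r / (r + 1) - 1 = -(1 / (r + 1)) := by field_simp; ring
    linarith

lemma strictAntiOn_div_add_one_rpow_self :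
    StrictAntiOn (fun r : ℝ => (r / (r + 1)) ^ r) (Ioi 0) := by
  intro a (ha : 0 < a) b (hb : 0 < b) hab
  simp only [rpow_def_of_pos (by positivity : 0 < a / (a + 1)),
    rpow_def_of_pos (by positivity : 0 < b / (b + 1)), exp_lt_exp, mul_comm (log _)]
  exact strictAntiOn_mul_log_div_add_one ha hb hab

/-- The function `γ(r) = 1 - 2 (r/(r+1))^r` on `(0,1)` is strictly increasing, negative,
and tends to `0` as `r → 1⁻`. -/
theorem stmt_7 :
    StrictMonoOn (fun r : ℝ => 1 - 2 * (r / (r + 1)) ^ r) (Set.Ioo 0 1) ∧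
      (∀ r ∈ Set.Ioo (0 : ℝ) 1, 1 - 2 * (r / (r + 1)) ^ r < 0) ∧
      Tendsto (fun r : ℝ => 1 - 2 * (r / (r + 1)) ^ r)
        (nhdsWithin 1 (Set.Iio 1)) (nhds 0) := by
  set γ : ℝ → ℝ := fun r => 1 - 2 * (r / (r + 1)) ^ r
  have hmono : StrictMonoOn γ (Ioi 0) := fun a ha b hb hab => by
    have := strictAntiOn_div_add_one_rpow_self ha hb hab
    simp only [γ]
    linarith
  have hγ_one : γ 1 = 0 := by norm_num [γ]
  have hcont : ContinuousAt γ 1 := by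
    refine continuousAt_const.sub (continuousAt_const.mul ?_)
    exact (continuousAt_id.div (by fun_prop) (by norm_num)).rpow continuousAt_id (by norm_num)
  refine ⟨hmono.mono Ioo_subset_Ioi_self, fun r hr => ?_, ?_⟩
  · exact hγ_one ▸ hmono hr.1 (mem_Ioi.2 one_pos) hr.2
  · exact hγ_one ▸ hcont.tendsto.mono_left nhdsWithin_le_nhds
end

section
/- For the traditional power logit family H(x,r) = G(x)^r with G the standard logistic c.d.f., as r → ∞ the Arnold–Groeneveld skewness γ(r) = 1 - 2·(r/(r+1))^r converges to 1 - 2/e ≈ 0.264; in particular the skewness of H(·,r) is bounded above by 1 - 2/e for all r > 0. -/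
open Real Filter Topology

/-! The skewness is `1 - 2 / (1 + 1/r)^r`, so both claims are statements about the compound-interest
function `(1 + 1/r)^r`: it tends to `e`, and it stays below `e` because `1 + x ≤ exp x`. -/

theorem Real.one_add_div_rpow_le_exp {r : ℝ} (t : ℝ) (hr : 0 < r) (ht : 0 ≤ 1 + t / r) :
    (1 + t / r) ^ r ≤ exp t :=
  calc (1 + t / r) ^ r ≤ exp (t / r) ^ r :=
        rpow_le_rpow ht (by linarith [add_one_le_exp (t / r)]) hr.le
    _ = exp t := by rw [← exp_mul, div_mul_cancel₀ t hr.ne']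

theorem Real.div_add_one_rpow_self {r : ℝ} (hr : 0 < r) :
    (r / (r + 1)) ^ r = ((1 + 1 / r) ^ r)⁻¹ := by
  rw [← inv_rpow (by positivity)]
  congr 1
  field_simp

theorem Real.exp_neg_one_le_div_add_one_rpow_self {r : ℝ} (hr : 0 < r) :
    exp (-1) ≤ (r / (r + 1)) ^ r := by
  rw [div_add_one_rpow_self hr, exp_neg]
  exact inv_anti₀ (by positivity) (one_add_div_rpow_le_exp 1 hr (by positivity))

theorem Real.tendsto_div_add_one_rpow_self_atTop :
    Tendsto (fun r : ℝ => (r / (r + 1)) ^ r) atTop (𝓝 (exp 1)⁻¹) := by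
  refine ((tendsto_one_add_div_rpow_exp 1).inv₀ (exp_ne_zero 1)).congr' ?_
  filter_upwards [eventually_gt_atTop 0] with r hr
  rw [div_add_one_rpow_self hr]

/-- For the traditional power logit family, the Arnold–Groeneveld skewness
`γ(r) = 1 - 2 (r/(r+1))^r` converges to `1 - 2/e` as `r → ∞`, and is bounded above by
`1 - 2/e` for all `r > 0`. -/
theorem stmt_8 :
    Tendsto (fun r : ℝ => 1 - 2 * (r / (r + 1)) ^ r) atTop
        (nhds (1 - 2 / Real.exp 1)) ∧
      ∀ r : ℝ, 0 < r → 1 - 2 * (r / (r + 1)) ^ r ≤ 1 - 2 / Real.exp 1 := by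
  refine ⟨?_, fun r hr => ?_⟩
  · simpa only [div_eq_mul_inv] using (tendsto_div_add_one_rpow_self_atTop.const_mul 2).const_sub 1
  · have h := exp_neg_one_le_div_add_one_rpow_self hr
    rw [exp_neg] at h
    rw [div_eq_mul_inv 2]
    linarith
end

section
/- The generalized extreme value c.d.f. G(x) = exp(-(1 + ξ·x)₊^{-1/ξ}) with μ = 0, σ = 1, and ξ > -1, ξ ≠ 0, has mode M = ((1+ξ)^{-ξ} - 1)/ξ, and its Arnold–Groeneveld skewness equals 1 - 2·exp(-(1+ξ)). -/
/-!
The density of `G` on `{1 + ξx > 0}` is `y ^ (1 + ξ) e^{-y}` with `y = (1 + ξx)^{-1/ξ}`, and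
`y ↦ y ^ a e^{-y}` peaks at `y = a`; here `a = 1 + ξ`, attained exactly at `x = M`, so that
`G(M) = e^{-(1+ξ)}`. Off that set `G ≡ 1`, so the density vanishes there.
-/

open Real Set Filter Topology

lemma rpow_mul_exp_neg_le {a y : ℝ} (ha : 0 < a) (hy : 0 ≤ y) :
    y ^ a * exp (-y) ≤ a ^ a * exp (-a) := by
  -- `t ≤ e^{t-1}` at `t = y / a`, raised to the power `a`
  have hlin : y / a ≤ exp (y / a - 1) := by linarith [add_one_le_exp (y / a - 1)]
  have hpow := rpow_le_rpow (div_nonneg hy ha.le) hlin ha.le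
  rw [div_rpow hy ha.le, ← exp_mul, sub_mul, div_mul_cancel₀ y ha.ne', one_mul,
    div_le_iff₀ (rpow_pos_of_pos ha a)] at hpow
  calc y ^ a * exp (-y) ≤ exp (y - a) * a ^ a * exp (-y) := by gcongr
    _ = a ^ a * exp (-a) := by rw [mul_comm (exp _), mul_assoc, ← exp_add]; ring_nf

noncomputable def gevCDF (ξ x : ℝ) : ℝ := exp (-(max (1 + ξ * x) 0) ^ (-1 / ξ))

noncomputable def gevMode (ξ : ℝ) : ℝ := ((1 + ξ) ^ (-ξ) - 1) / ξ

variable {ξ : ℝ}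

lemma one_add_mul_gevMode (hξ0 : ξ ≠ 0) : 1 + ξ * gevMode ξ = (1 + ξ) ^ (-ξ) := by
  rw [gevMode]
  field_simp
  ring

lemma one_add_mul_gevMode_rpow (hξ : -1 < ξ) (hξ0 : ξ ≠ 0) :
    (1 + ξ * gevMode ξ) ^ (-1 / ξ) = 1 + ξ := by
  rw [one_add_mul_gevMode hξ0, ← rpow_mul (by linarith), show -ξ * (-1 / ξ) = 1 by field_simp,
    rpow_one]

namespace gevCDF

lemma le_one (x : ℝ) : gevCDF ξ x ≤ 1 := by
  rw [gevCDF, exp_le_one_iff, neg_nonpos]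
  exact rpow_nonneg (le_max_right _ _) _

lemma eq_one_of_nonpos (hξ0 : ξ ≠ 0) {x : ℝ} (hx : 1 + ξ * x ≤ 0) : gevCDF ξ x = 1 := by
  rw [gevCDF, max_eq_right hx, zero_rpow (by simpa using hξ0), neg_zero, exp_zero]

lemma deriv_eq_zero_of_nonpos (hξ0 : ξ ≠ 0) {x : ℝ} (hx : 1 + ξ * x ≤ 0) :
    deriv (gevCDF ξ) x = 0 :=
  IsLocalMax.deriv_eq_zero <| Filter.Eventually.of_forall fun y =>
    (le_one y).trans_eq (eq_one_of_nonpos hξ0 hx).symm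

lemma hasDerivAt (hξ0 : ξ ≠ 0) {x : ℝ} (hx : 0 < 1 + ξ * x) :
    HasDerivAt (gevCDF ξ)
      (((1 + ξ * x) ^ (-1 / ξ)) ^ (1 + ξ) * exp (-(1 + ξ * x) ^ (-1 / ξ))) x := by
  have hlin : HasDerivAt (fun y : ℝ => 1 + ξ * y) ξ x := by
    simpa using ((hasDerivAt_id x).const_mul ξ).const_add 1
  have hexp := (((hasDerivAt_rpow_const (p := -1 / ξ) (Or.inl hx.ne')).comp x hlin).neg).exp
  have heq : gevCDF ξ =ᶠ[𝓝 x] fun y => exp (-(1 + ξ * y) ^ (-1 / ξ)) := by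
    filter_upwards [continuousAt_const.eventually_lt hlin.continuousAt hx] with y hy
    rw [gevCDF, max_eq_left (hy.le)]
  refine (hexp.congr_of_eventuallyEq heq).congr_deriv ?_
  rw [← rpow_mul hx.le, show -1 / ξ * (1 + ξ) = -1 / ξ - 1 by field_simp; ring]
  simp only [Function.comp_def, Pi.neg_apply]
  field_simp

lemma deriv_le (hξ : -1 < ξ) (hξ0 : ξ ≠ 0) (x : ℝ) :
    deriv (gevCDF ξ) x ≤ (1 + ξ) ^ (1 + ξ) * exp (-(1 + ξ)) := by
  have ha : 0 < 1 + ξ := by linarith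
  rcases le_or_gt (1 + ξ * x) 0 with hx | hx
  · rw [deriv_eq_zero_of_nonpos hξ0 hx]
    positivity
  · rw [(hasDerivAt hξ0 hx).deriv]
    exact rpow_mul_exp_neg_le ha (rpow_nonneg hx.le _)

lemma apply_gevMode (hξ : -1 < ξ) (hξ0 : ξ ≠ 0) : gevCDF ξ (gevMode ξ) = exp (-(1 + ξ)) := by
  have hpos : 0 ≤ 1 + ξ * gevMode ξ := by
    rw [one_add_mul_gevMode hξ0]
    exact rpow_nonneg (by linarith) _
  rw [gevCDF, max_eq_left hpos, one_add_mul_gevMode_rpow hξ hξ0]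

lemma deriv_gevMode (hξ : -1 < ξ) (hξ0 : ξ ≠ 0) :
    deriv (gevCDF ξ) (gevMode ξ) = (1 + ξ) ^ (1 + ξ) * exp (-(1 + ξ)) := by
  have hpos : 0 < 1 + ξ * gevMode ξ := by
    rw [one_add_mul_gevMode hξ0]
    exact rpow_pos_of_pos (by linarith) _
  rw [(hasDerivAt hξ0 hpos).deriv, one_add_mul_gevMode_rpow hξ hξ0]

end gevCDF

/-- The generalized extreme value c.d.f. `G(x) = exp(-(1+ξx)₊^{-1/ξ})` with `ξ > -1`,
`ξ ≠ 0`, has mode `M = ((1+ξ)^{-ξ} - 1)/ξ` (maximizer of the density `G'`), and its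
Arnold–Groeneveld skewness `1 - 2 G(M)` equals `1 - 2 exp(-(1+ξ))`. -/
theorem stmt_10 (ξ : ℝ) (hξ : -1 < ξ) (hξ0 : ξ ≠ 0)
    (G : ℝ → ℝ) (hG : ∀ x, G x = Real.exp (-(max (1 + ξ * x) 0) ^ (-1 / ξ)))
    (M : ℝ) (hM : M = ((1 + ξ) ^ (-ξ) - 1) / ξ) :
    (∀ x, deriv G x ≤ deriv G M) ∧ 1 - 2 * G M = 1 - 2 * Real.exp (-(1 + ξ)) := by
  obtain rfl : G = gevCDF ξ := funext hG
  obtain rfl : M = gevMode ξ := hM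
  refine ⟨fun x => ?_, by rw [gevCDF.apply_gevMode hξ hξ0]⟩
  rw [gevCDF.deriv_gevMode hξ hξ0]
  exact gevCDF.deriv_le hξ hξ0 x
end

section
/- Let X* be an n × k real matrix of full column rank k, and suppose there exists a strictly positive vector a ∈ ℝⁿ with a'X* = 0. Then there exists a constant K > 0 such that for any β ∈ ℝᵏ and u ∈ ℝⁿ satisfying X*β ≤ u (componentwise), one has ‖β‖ ≤ K · max_{1 ≤ i ≤ n} |uᵢ|. -/
open Real Set Filter Topology

set_option maxHeartbeats 800000 in
/-- Chen–Shao geometric lemma: if `X*` is an `n × k` matrix of full column rank and there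
is a strictly positive vector `a` with `a' X* = 0`, then there is a constant `K > 0` such
that `X* β ≤ u` componentwise implies `‖β‖ ≤ K · max_i |u_i|`. -/
theorem stmt_17 {n k : ℕ} [NeZero n] (X : Matrix (Fin n) (Fin k) ℝ)
    (hrank : X.rank = k) (a : Fin n → ℝ) (ha : ∀ i, 0 < a i)
    (haX : Matrix.vecMul a X = 0) :
    ∃ K > 0, ∀ (β : Fin k → ℝ) (u : Fin n → ℝ),
      (∀ i, X.mulVec β i ≤ u i) → ‖β‖ ≤ K * ⨆ i, |u i| := by
  classical
  set f := X.mulVecLin with hf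
  -- injectivity of f
  have hinj : Function.Injective f := by
    rw [← LinearMap.ker_eq_bot]
    have h1 := LinearMap.finrank_range_add_finrank_ker f
    rw [show Module.finrank ℝ (LinearMap.range f) = X.rank from rfl, hrank] at h1
    have hk : Module.finrank ℝ (Fin k → ℝ) = k := Module.finrank_fin_fun ℝ
    rw [hk] at h1
    have : Module.finrank ℝ (LinearMap.ker f) = 0 := by omega
    exact Submodule.finrank_eq_zero.mp this
  let e : (Fin k → ℝ) ≃ₗ[ℝ] LinearMap.range f := LinearEquiv.ofInjective f hinj
  let e' := e.toContinuousLinearEquiv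
  let g : (LinearMap.range f) →L[ℝ] (Fin k → ℝ) := e'.symm
  obtain ⟨N, hNnn, hg⟩ : ∃ N : ℝ, 0 ≤ N ∧ ∀ v, ‖g v‖ ≤ N * ‖v‖ :=
    ⟨‖g‖, norm_nonneg g, fun v => g.le_opNorm v⟩
  -- constants
  set S : ℝ := ∑ j, a j with hS
  have hSpos : 0 < S := Finset.sum_pos (fun j _ => ha j) Finset.univ_nonempty
  set c : ℝ := Finset.univ.inf' Finset.univ_nonempty a with hc
  have hcpos : 0 < c := by
    obtain ⟨i, _, hi⟩ := Finset.exists_mem_eq_inf' (Finset.univ_nonempty) a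
    rw [hc, hi]; exact ha i
  have hcle : ∀ i, c ≤ a i := fun i => Finset.inf'_le a (Finset.mem_univ i)
  have hCpos : 0 < S / c := div_pos hSpos hcpos
  refine ⟨N * (S / c) + 1, by positivity, fun β u hu => ?_⟩
  obtain ⟨M, hMdef, hMle, hMnn⟩ : ∃ M : ℝ, M = ⨆ i, |u i| ∧ (∀ i, |u i| ≤ M) ∧ 0 ≤ M := by
    have hbdd : BddAbove (Set.range fun i => |u i|) := Set.Finite.bddAbove (Set.finite_range _)
    have hMle : ∀ i, |u i| ≤ (⨆ i, |u i|) := fun i => le_ciSup hbdd i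
    exact ⟨_, rfl, hMle, le_trans (abs_nonneg _) (hMle (Classical.arbitrary (Fin n)))⟩
  rw [← hMdef]
  -- dot product identity
  have hdot : ∑ j, a j * X.mulVec β j = 0 := by
    have := Matrix.dotProduct_mulVec a X β
    rw [haX, zero_dotProduct] at this
    simpa [dotProduct] using this
  -- pointwise bound on |mulVec β i|
  have hptw : ∀ i, |X.mulVec β i| ≤ (S / c) * M := by
    intro i
    have hup : ∀ j, X.mulVec β j ≤ M := fun j =>
      (hu j).trans ((le_abs_self _).trans (hMle j))
    have haiS : a i ≤ S := Finset.single_le_sum (fun j _ => (ha j).le) (Finset.mem_univ i)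
    -- lower bound: a i * mv i = -∑_{j≠i} a j mv j ≥ -S*M
    have hlow : -(S * M) ≤ a i * X.mulVec β i := by
      have hsplit : a i * X.mulVec β i + ∑ j ∈ Finset.univ.erase i, a j * X.mulVec β j = 0 :=
        (Finset.add_sum_erase Finset.univ (fun j => a j * X.mulVec β j)
          (Finset.mem_univ i)).trans hdot
      have hsum : ∑ j ∈ Finset.univ.erase i, a j * X.mulVec β j ≤ S * M := by
        calc ∑ j ∈ Finset.univ.erase i, a j * X.mulVec β j
            ≤ ∑ j ∈ Finset.univ.erase i, a j * M :=
              Finset.sum_le_sum fun j _ => mul_le_mul_of_nonneg_left (hup j) (ha j).le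
          _ ≤ ∑ j, a j * M := Finset.sum_le_sum_of_subset_of_nonneg
              (Finset.erase_subset _ _) (fun j _ _ => mul_nonneg (ha j).le hMnn)
          _ = S * M := by rw [hS, Finset.sum_mul]
      linarith
    have hhi : X.mulVec β i ≤ (S / c) * M := by
      have h1 : X.mulVec β i ≤ M := hup i
      have hMCM : M ≤ (S / c) * M := by
        rw [div_mul_eq_mul_div, le_div_iff₀ hcpos]
        nlinarith [hcle i, ha i]
      linarith
    have hlo : -((S / c) * M) ≤ X.mulVec β i := by
      rcases le_or_gt 0 (X.mulVec β i) with h | h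
      · nlinarith
      · -- a i * mv ≤ c * mv since mv < 0 and c ≤ a i
        have h2 : a i * X.mulVec β i ≤ c * X.mulVec β i :=
          mul_le_mul_of_nonpos_right (hcle i) h.le
        have h3 : -(S * M) ≤ c * X.mulVec β i := le_trans hlow h2
        have h4 : S / c * M * c = S * M := by field_simp
        nlinarith
    exact abs_le.mpr ⟨hlo, hhi⟩
  -- norm bound on mulVec
  have hnorm : ‖f β‖ ≤ (S / c) * M := by
    rw [pi_norm_le_iff_of_nonneg (by positivity)]
    intro i
    simpa [Real.norm_eq_abs, hf] using hptw i
  -- inverse bound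
  have hβ : ‖β‖ ≤ N * ‖f β‖ := by
    have h1 : g (e' β) = β := e'.symm_apply_apply β
    have h2 : ‖e' β‖ = ‖f β‖ := rfl
    calc ‖β‖ = ‖g (e' β)‖ := by rw [h1]
      _ ≤ N * ‖e' β‖ := hg _
      _ = N * ‖f β‖ := by rw [h2]
  calc ‖β‖ ≤ N * ((S / c) * M) := hβ.trans (mul_le_mul_of_nonneg_left hnorm hNnn)
    _ ≤ (N * (S / c) + 1) * M := by nlinarith
end

section
/- Under the assumptions of the geometric lemma (X* of full column rank k with a positive vector a satisfying a'X* = 0), and letting u₁,…,uₙ be i.i.d. with a continuous symmetric c.d.f. F₀ having finite k-th absolute moment, the integral ∫_{ℝᵏ} ∫_{ℝⁿ} 1{X*β ≤ u} dF₀ⁿ(u) dβ is finite, bounded by K·Σᵢ E|uᵢ|^k up to a constant. -/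
/-!
Weighting by `a > 0` and using `a' X* β = 0` gives `∑ᵢ aᵢ (X* β)ᵢ⁻ = ∑ᵢ aᵢ (X* β)ᵢ⁺`, so the
negative parts of `X* β` are controlled by its positive parts; with full column rank this yields
`‖β‖ ≤ C ∑ᵢ (X* β)ᵢ⁺`. Hence `{β | X* β ≤ u}` lies in a ball of radius `C ∑ᵢ |uᵢ|`, of volume
`O((∑ᵢ |uᵢ|)^k)`. By Tonelli the integral in question is `∫ vol{β | X* β ≤ u} dF₀ⁿ(u)`, which is
finite by the moment assumption.
-/

open Filter MeasureTheory Finset Matrix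

lemma sum_mul_negPart_eq_sum_mul_posPart {ι : Type*} [Fintype ι] {a v : ι → ℝ}
    (h : a ⬝ᵥ v = 0) : ∑ i, a i * (v i)⁻ = ∑ i, a i * (v i)⁺ := by
  have : ∑ i, a i * ((v i)⁺ - (v i)⁻) = 0 := by
    simpa only [posPart_sub_negPart, dotProduct] using h
  simp only [mul_sub, sum_sub_distrib] at this
  linarith

lemma exists_norm_le_mul_sum_posPart {ι : Type*} [Fintype ι] {a : ι → ℝ} (ha : ∀ i, 0 < a i) :
    ∃ C, 0 ≤ C ∧ ∀ v : ι → ℝ, a ⬝ᵥ v = 0 → ‖v‖ ≤ C * ∑ i, (v i)⁺ := by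
  set A := ∑ i, a i
  have hA : 0 ≤ A := sum_nonneg fun i _ => (ha i).le
  have hterm : ∀ i, 0 ≤ 1 + A / a i := fun i => by have := ha i; positivity
  refine ⟨∑ i, (1 + A / a i), sum_nonneg fun i _ => hterm i, fun v hv => ?_⟩
  set S := ∑ i, (v i)⁺
  have hS : 0 ≤ S := sum_nonneg fun i _ => posPart_nonneg _
  refine (pi_norm_le_iff_of_nonneg (mul_nonneg (sum_nonneg fun i _ => hterm i) hS)).2 fun i => ?_
  have hpos : (v i)⁺ ≤ S := single_le_sum (fun j _ => posPart_nonneg (v j)) (mem_univ i)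
  have hneg : a i * (v i)⁻ ≤ A * S := calc
    a i * (v i)⁻ ≤ ∑ j, a j * (v j)⁻ :=
      single_le_sum (fun j _ => mul_nonneg (ha j).le (negPart_nonneg _)) (mem_univ i)
    _ = ∑ j, a j * (v j)⁺ := sum_mul_negPart_eq_sum_mul_posPart hv
    _ ≤ ∑ j, A * (v j)⁺ := sum_le_sum fun j _ => mul_le_mul_of_nonneg_right
      (single_le_sum (fun j _ => (ha j).le) (mem_univ j)) (posPart_nonneg _)
    _ = A * S := (mul_sum ..).symm
  calc ‖v i‖ = (v i)⁺ + (v i)⁻ := by rw [Real.norm_eq_abs, posPart_add_negPart]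
    _ ≤ (1 + A / a i) * S := by
      have : (v i)⁻ ≤ A / a i * S := by
        rw [div_mul_eq_mul_div, le_div_iff₀ (ha i)]; linarith
      linarith
    _ ≤ (∑ j, (1 + A / a j)) * S := mul_le_mul_of_nonneg_right
      (single_le_sum (f := fun j => 1 + A / a j) (fun j _ => hterm j) (mem_univ i)) hS

lemma Matrix.mulVec_injective_of_rank_eq_card {K m n : Type*} [Field K] [Fintype n]
    {X : Matrix m n K} (hX : X.rank = Fintype.card n) : Function.Injective X.mulVec := by
  have h := X.mulVecLin.finrank_range_add_finrank_ker
  rw [Module.finrank_fintype_fun_eq_card, ← rank, hX, Nat.add_eq_left,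
    Submodule.finrank_eq_zero, LinearMap.ker_eq_bot] at h
  exact h

lemma Matrix.exists_norm_le_mul_norm_mulVec {m n : Type*} [Fintype m] [Fintype n]
    {X : Matrix m n ℝ} (hX : Function.Injective X.mulVec) :
    ∃ K, 0 ≤ K ∧ ∀ β, ‖β‖ ≤ K * ‖X *ᵥ β‖ := by
  obtain ⟨K, -, hK⟩ := X.mulVecLin.injective_iff_antilipschitz.mp hX
  exact ⟨K, K.2, hK.le_mul_norm (map_zero _)⟩

lemma Matrix.exists_norm_le_mul_sum_posPart_mulVec {m n : Type*} [Fintype m] [Fintype n]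
    {X : Matrix m n ℝ} (hX : Function.Injective X.mulVec) {a : m → ℝ} (ha : ∀ i, 0 < a i)
    (haX : a ᵥ* X = 0) : ∃ C, 0 ≤ C ∧ ∀ β, ‖β‖ ≤ C * ∑ i, ((X *ᵥ β) i)⁺ := by
  obtain ⟨K, hK0, hK⟩ := exists_norm_le_mul_norm_mulVec hX
  obtain ⟨C, hC0, hC⟩ := exists_norm_le_mul_sum_posPart ha
  refine ⟨K * C, mul_nonneg hK0 hC0, fun β => ?_⟩
  have hker : a ⬝ᵥ X *ᵥ β = 0 := by rw [dotProduct_mulVec, haX, zero_dotProduct]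
  calc ‖β‖ ≤ K * ‖X *ᵥ β‖ := hK β
    _ ≤ K * (C * ∑ i, ((X *ᵥ β) i)⁺) := mul_le_mul_of_nonneg_left (hC _ hker) hK0
    _ = K * C * ∑ i, ((X *ᵥ β) i)⁺ := (mul_assoc ..).symm

lemma Matrix.setOf_mulVec_le_subset_closedBall {m n : Type*} [Fintype m] [Fintype n]
    {X : Matrix m n ℝ} {C : ℝ} (hC : ∀ β, ‖β‖ ≤ C * ∑ i, ((X *ᵥ β) i)⁺) (hC0 : 0 ≤ C)
    (u : m → ℝ) : {β | ∀ i, (X *ᵥ β) i ≤ u i} ⊆ Metric.closedBall 0 (C * ∑ i, |u i|) := by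
  intro β hβ
  rw [Metric.mem_closedBall, dist_zero_right]
  refine (hC β).trans (mul_le_mul_of_nonneg_left (sum_le_sum fun i _ => ?_) hC0)
  exact (posPart_mono (hβ i)).trans (max_le (le_abs_self _) (abs_nonneg _))

lemma Matrix.isClosed_setOf_mulVec_le {m n : Type*} [Fintype m] [Fintype n] (X : Matrix m n ℝ) :
    IsClosed {p : (n → ℝ) × (m → ℝ) | ∀ i, (X *ᵥ p.1) i ≤ p.2 i} := by
  simp only [Set.ofPred_forall]
  exact isClosed_iInter fun i => isClosed_le (by fun_prop) (by fun_prop)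

lemma Matrix.lintegral_measure_setOf_mulVec_le {m n : Type*} [Fintype m] [Fintype n]
    (X : Matrix m n ℝ) (μ : Measure (n → ℝ)) (ν : Measure (m → ℝ)) [SFinite μ] [SFinite ν] :
    ∫⁻ β, ν {u | ∀ i, (X *ᵥ β) i ≤ u i} ∂μ = ∫⁻ u, μ {β | ∀ i, (X *ᵥ β) i ≤ u i} ∂ν := by
  have hS := X.isClosed_setOf_mulVec_le.measurableSet
  exact (Measure.prod_apply hS).symm.trans (Measure.prod_apply_symm hS)

lemma sum_pow_le_card_pow_mul_sum_pow {ι : Type*} [Fintype ι] [Nonempty ι] {x : ι → ℝ}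
    (hx : ∀ i, 0 ≤ x i) : ∀ p : ℕ, (∑ i, x i) ^ p ≤ (Fintype.card ι : ℝ) ^ p * ∑ i, x i ^ p
  | 0 => by simp [Nat.one_le_iff_ne_zero]
  | p + 1 => (pow_sum_le_card_mul_sum_pow (fun i _ => hx i) p).trans <|
      mul_le_mul_of_nonneg_right (pow_le_pow_right₀ (by simp [Nat.one_le_iff_ne_zero]) p.le_succ)
        (sum_nonneg fun i _ => pow_nonneg (hx i) _)

lemma lintegral_pi_ofReal_sum_abs_pow_lt_top {ι : Type*} [Fintype ι] [Nonempty ι]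
    {μ : Measure ℝ} [IsProbabilityMeasure μ] {p : ℕ}
    (hmom : ∫⁻ t, ENNReal.ofReal (|t| ^ p) ∂μ < ⊤) :
    ∫⁻ u, ENNReal.ofReal ((∑ i, |u i|) ^ p) ∂(Measure.pi fun _ : ι => μ) < ⊤ := by
  have hmeas : Measurable fun t : ℝ => ENNReal.ofReal (|t| ^ p) := by fun_prop
  calc ∫⁻ u, ENNReal.ofReal ((∑ i, |u i|) ^ p) ∂(Measure.pi fun _ : ι => μ)
      ≤ ∫⁻ u, ENNReal.ofReal ((Fintype.card ι : ℝ) ^ p) * ∑ i, ENNReal.ofReal (|u i| ^ p)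
          ∂(Measure.pi fun _ : ι => μ) := lintegral_mono fun u => by
        rw [← ENNReal.ofReal_sum_of_nonneg fun i _ => by positivity,
          ← ENNReal.ofReal_mul (by positivity)]
        exact ENNReal.ofReal_le_ofReal (sum_pow_le_card_pow_mul_sum_pow (fun i => abs_nonneg _) p)
    _ = ENNReal.ofReal ((Fintype.card ι : ℝ) ^ p) *
          ∑ _i : ι, ∫⁻ t, ENNReal.ofReal (|t| ^ p) ∂μ := by
        rw [lintegral_const_mul _ (by fun_prop), lintegral_finsetSum _ fun i _ => by fun_prop]
        congr 1
        exact sum_congr rfl fun i _ => (measurePreserving_eval (fun _ => μ) i).lintegral_comp hmeas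
    _ < ⊤ := ENNReal.mul_lt_top ENNReal.ofReal_lt_top
        (ENNReal.sum_lt_top.2 fun _ _ => hmom)

theorem stmt_18_general {n k : ℕ} [NeZero n] (f : StieltjesFunction ℝ)
    (h0 : Tendsto (f : ℝ → ℝ) atBot (nhds 0)) (h1 : Tendsto (f : ℝ → ℝ) atTop (nhds 1))
    (hmom : ∫⁻ u, ENNReal.ofReal (|u| ^ k) ∂f.measure < ⊤)
    (X : Matrix (Fin n) (Fin k) ℝ) (hrank : X.rank = k)
    (a : Fin n → ℝ) (ha : ∀ i, 0 < a i) (haX : Matrix.vecMul a X = 0) :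
    ∫⁻ β : Fin k → ℝ,
        (Measure.pi fun _ : Fin n => f.measure) {u | ∀ i, X.mulVec β i ≤ u i} < ⊤ := by
  have := f.isProbabilityMeasure h0 h1
  obtain ⟨C, hC0, hC⟩ := X.exists_norm_le_mul_sum_posPart_mulVec
    (X.mulVec_injective_of_rank_eq_card (by rwa [Fintype.card_fin])) ha haX
  rw [X.lintegral_measure_setOf_mulVec_le]
  calc ∫⁻ u, volume {β | ∀ i, (X *ᵥ β) i ≤ u i} ∂(Measure.pi fun _ => f.measure)
      ≤ ∫⁻ u, ENNReal.ofReal ((2 * C) ^ k) * ENNReal.ofReal ((∑ i, |u i|) ^ k)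
          ∂(Measure.pi fun _ => f.measure) := lintegral_mono fun u => by
        grw [measure_mono (X.setOf_mulVec_le_subset_closedBall hC hC0 u),
          Real.volume_pi_closedBall _ (by positivity), Fintype.card_fin,
          ← ENNReal.ofReal_mul (by positivity), ← mul_pow, mul_assoc]
    _ < ⊤ := by
        rw [lintegral_const_mul _ (by fun_prop)]
        exact ENNReal.mul_lt_top ENNReal.ofReal_lt_top
          (lintegral_pi_ofReal_sum_abs_pow_lt_top hmom)

/-- Posterior propriety of the binary regression model under a flat prior on `β`: with
`u₁,…,uₙ` i.i.d. from a continuous symmetric c.d.f. `F₀` with finite `k`-th absolute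
moment, and `X*` of full column rank admitting a positive vector `a` with `a' X* = 0`,
the integral `∫_{ℝᵏ} P(X* β ≤ u) dβ` is finite. -/
theorem stmt_18 {n k : ℕ} [NeZero n] (f : StieltjesFunction ℝ) (hcont : Continuous f)
    (h0 : Tendsto (f : ℝ → ℝ) atBot (nhds 0)) (h1 : Tendsto (f : ℝ → ℝ) atTop (nhds 1))
    (hsym : ∀ x, f (-x) = 1 - f x)
    (hmom : ∫⁻ u, ENNReal.ofReal (|u| ^ k) ∂f.measure < ⊤)
    (X : Matrix (Fin n) (Fin k) ℝ) (hrank : X.rank = k)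
    (a : Fin n → ℝ) (ha : ∀ i, 0 < a i) (haX : Matrix.vecMul a X = 0) :
    ∫⁻ β : Fin k → ℝ,
        (Measure.pi fun _ : Fin n => f.measure) {u | ∀ i, X.mulVec β i ≤ u i} < ⊤ :=
  stmt_18_general f h0 h1 hmom X hrank a ha haX
end
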